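/- For every real number s with 0 < s < π²/2, the series Σ_{i=0}^∞ β_i s^i converges (HasSum), and its sum equals √(2s)/sin(√(2s)). -/

import Mathlib

/-!
Write `z = √(2s) = π t` with `0 < t < 1`. The identity `1 / sin x = cot (x / 2) - cot x` turns
the Mittag-Leffler expansion of `π t cot (π t)` into
`z / sin z - 1 = ∑_{n ≥ 1} (2 t² / (n² - t²) - t² / (n² - t² / 4))`.
Expanding each summand as a geometric series in `(t / n)²` gives a double series of nonnegative
terms. Summing it column by column instead produces `ζ(2k)` in the `k`-th column, and Euler's
formula for `ζ(2k)` turns the column sums into the Taylor coefficients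
`(-1)^(k+1) (2^(2k) - 2) B_{2k} z^(2k) / (2k)!` of `z / sin z`, which are the `β_k s^k`.
-/

noncomputable section

/-- `β_i = (−1)^{i−1} · 2^i · (2^{2i} − 2) · B_{2i}/(2i)!` as a real number.
(We write `(−1)^{i+1} = (−1)^{i−1}`, which is also correct for `i = 0`;
in particular `β_0 = 1` and `β_1 = 1/3`.) -/
def betaCoeff (i : ℕ) : ℝ :=
  (-1 : ℝ) ^ (i + 1) * 2 ^ i * (2 ^ (2 * i) - 2) *
    ((bernoulli (2 * i) : ℚ) : ℝ) / Nat.factorial (2 * i)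

open Real

def cscCoeff (i : ℕ) : ℝ :=
  (-1 : ℝ) ^ (i + 1) * (2 ^ (2 * i) - 2) * ((bernoulli (2 * i) : ℚ) : ℝ) /
    Nat.factorial (2 * i)

lemma cscCoeff_zero : cscCoeff 0 = 1 := by
  norm_num [cscCoeff]

lemma betaCoeff_mul_pow (i : ℕ) (s : ℝ) : betaCoeff i * s ^ i = cscCoeff i * (2 * s) ^ i := by
  rw [betaCoeff, cscCoeff, mul_pow]
  ring

lemma hasSum_comm_of_nonneg {β γ : Type*} {F : β → γ → ℝ} (hF : ∀ b c, 0 ≤ F b c)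
    {row : β → ℝ} {col : γ → ℝ} {S : ℝ} (hrow : ∀ b, HasSum (F b) (row b))
    (hcol : ∀ c, HasSum (fun b => F b c) (col c)) (hS : HasSum row S) :
    HasSum col S := by
  have hsummable : Summable (Function.uncurry F) :=
    (summable_prod_of_nonneg fun p => hF p.1 p.2).mpr
      ⟨fun b => (hrow b).summable, hS.summable.congr fun b => ((hrow b).tsum_eq).symm⟩
  have htsum : ∑' p, Function.uncurry F p = S := (hsummable.hasSum.prod_fiberwise hrow).unique hS
  have hF : HasSum (Function.uncurry F) S := htsum ▸ hsummable.hasSum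
  exact ((Equiv.prodComm γ β).hasSum_iff.mpr hF).prod_fiberwise hcol

lemma Real.cot_sub_cot_two_mul {x : ℝ} (hx : sin (2 * x) ≠ 0) :
    cot x - cot (2 * x) = 1 / sin (2 * x) := by
  rw [sin_two_mul] at hx ⊢
  have hsin : sin x ≠ 0 := by intro h; simp [h] at hx
  have hcos : cos x ≠ 0 := by intro h; simp [h] at hx
  rw [cot_eq_cos_div_sin, cot_eq_cos_div_sin, sin_two_mul, cos_two_mul]
  field_simp
  ring

theorem hasSum_one_sub_mul_cot {t : ℝ} (ht : ∀ n : ℤ, (n : ℝ) ≠ t) :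
    HasSum (fun n : ℕ => 2 * t ^ 2 / ((n + 1) ^ 2 - t ^ 2)) (1 - π * t * cot (π * t)) := by
  have hz : (t : ℂ) ∈ Complex.integerComplement := by
    rintro ⟨n, hn⟩
    exact ht n (by exact_mod_cast hn)
  have h := ((summable_cotTerm hz).hasSum_iff.mpr (cot_series_rep' hz).symm).mul_left
    (-(t : ℂ))
  have hterm (n : ℕ) :
      -(t : ℂ) * cotTerm t n = ((2 * t ^ 2 / ((n + 1) ^ 2 - t ^ 2) : ℝ) : ℂ) := by
    have h1 : (t : ℂ) - (n + 1) ≠ 0 :=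
      sub_ne_zero.mpr fun h => ht (n + 1) (by exact_mod_cast h.symm)
    have h2 : (t : ℂ) + (n + 1) ≠ 0 :=
      fun h => ht (-((n : ℤ) + 1)) (by exact_mod_cast (eq_neg_of_add_eq_zero_left h).symm)
    have h3 : ((n : ℂ) + 1) ^ 2 - t ^ 2 ≠ 0 := by
      rw [sq_sub_sq]
      exact mul_ne_zero (by rwa [add_comm]) (by rw [← neg_sub]; exact neg_ne_zero.mpr h1)
    push_cast
    field_simp
    ring
  have hval : -(t : ℂ) * (π * Complex.cot (π * t) - 1 / t) =
      ((1 - π * t * cot (π * t) : ℝ) : ℂ) := by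
    have h0 : (t : ℂ) ≠ 0 :=
      Complex.ofReal_ne_zero.mpr fun h => ht 0 (by simp [h])
    push_cast [Complex.ofReal_cot]
    field_simp
    ring
  rw [← Complex.hasSum_ofReal, ← hval]
  simpa only [hterm] using h

theorem hasSum_mul_div_sin_sub_one {t : ℝ} (ht : ∀ n : ℤ, (n : ℝ) ≠ t) :
    HasSum (fun n : ℕ => 2 * t ^ 2 / ((n + 1) ^ 2 - t ^ 2) - t ^ 2 / ((n + 1) ^ 2 - (t / 2) ^ 2))
      (π * t / sin (π * t) - 1) := by
  have ht2 (n : ℤ) : (n : ℝ) ≠ t / 2 := fun h => ht (2 * n) (by push_cast; linarith)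
  have hsin : sin (2 * (π * (t / 2))) ≠ 0 := by
    rw [show 2 * (π * (t / 2)) = t * π by ring, Ne, sin_eq_zero_iff]
    rintro ⟨n, hn⟩
    exact ht n (mul_right_cancel₀ pi_ne_zero hn)
  have hcot := cot_sub_cot_two_mul hsin
  rw [show 2 * (π * (t / 2)) = π * t by ring] at hcot
  have hval : π * t / sin (π * t) - 1 =
      (1 - π * t * cot (π * t)) - 2 * (1 - π * (t / 2) * cot (π * (t / 2))) := by
    rw [div_eq_mul_one_div, ← hcot]
    ring
  rw [hval]
  exact ((hasSum_one_sub_mul_cot ht).sub ((hasSum_one_sub_mul_cot ht2).mul_left 2)).congr_fun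
    fun n => by ring

-- The `n`-th summand of `hasSum_mul_div_sin_sub_one`, expanded in powers of `(t / (n + 1))²`.
def cscSeriesTerm (t : ℝ) (n k : ℕ) : ℝ :=
  (2 - (1 / 4 : ℝ) ^ k) * (t / (n + 1)) ^ (2 * (k + 1))

lemma cscSeriesTerm_nonneg (t : ℝ) (n k : ℕ) : 0 ≤ cscSeriesTerm t n k := by
  have : (1 / 4 : ℝ) ^ k ≤ 1 := pow_le_one₀ (by norm_num) (by norm_num)
  exact mul_nonneg (by linarith) (by rw [pow_mul]; positivity)

lemma hasSum_cscSeriesTerm_row {t : ℝ} {n : ℕ} (ht : |t| < n + 1) :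
    HasSum (cscSeriesTerm t n)
      (2 * t ^ 2 / ((n + 1) ^ 2 - t ^ 2) - t ^ 2 / ((n + 1) ^ 2 - (t / 2) ^ 2)) := by
  have hn : (0 : ℝ) < n + 1 := by positivity
  have hr : (t / (n + 1)) ^ 2 < 1 := by
    rw [sq_lt_one_iff_abs_lt_one, abs_div, abs_of_pos hn, div_lt_one hn]
    exact ht
  have hr4 : (t / (n + 1)) ^ 2 / 4 < 1 := by linarith
  have h1 := (hasSum_geometric_of_lt_one (by positivity) hr).mul_left (2 * (t / (n + 1)) ^ 2)
  have h2 := (hasSum_geometric_of_lt_one (by positivity) hr4).mul_left ((t / (n + 1)) ^ 2)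
  have hval : 2 * t ^ 2 / ((n + 1) ^ 2 - t ^ 2) - t ^ 2 / ((n + 1) ^ 2 - (t / 2) ^ 2) =
      2 * (t / (n + 1)) ^ 2 * (1 - (t / (n + 1)) ^ 2)⁻¹ -
        (t / (n + 1)) ^ 2 * (1 - (t / (n + 1)) ^ 2 / 4)⁻¹ := by
    have ht2 : t ^ 2 < (n + 1) ^ 2 := sq_lt_sq' (abs_lt.mp ht).1 (abs_lt.mp ht).2
    have hd1 : ((n : ℝ) + 1) ^ 2 - t ^ 2 ≠ 0 := by linarith
    have hd2 : ((n : ℝ) + 1) ^ 2 - (t / 2) ^ 2 ≠ 0 := by nlinarith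
    rw [div_pow]
    field_simp
    ring
  rw [hval]
  exact (h1.sub h2).congr_fun fun k => by
    simp only [cscSeriesTerm, pow_mul]
    ring

lemma hasSum_one_div_succ_pow_two_mul {k : ℕ} (hk : k ≠ 0) :
    HasSum (fun n : ℕ => 1 / ((n : ℝ) + 1) ^ (2 * k))
      ((-1 : ℝ) ^ (k + 1) * 2 ^ (2 * k - 1) * π ^ (2 * k) * bernoulli (2 * k) /
        Nat.factorial (2 * k)) := by
  have h := (hasSum_nat_add_iff' 1).mpr (hasSum_zeta_nat hk)
  simpa [hk] using h

lemma hasSum_cscSeriesTerm_col (t : ℝ) (k : ℕ) :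
    HasSum (fun n => cscSeriesTerm t n k) (cscCoeff (k + 1) * (π * t) ^ (2 * (k + 1))) := by
  have h := (hasSum_one_div_succ_pow_two_mul k.add_one_ne_zero).mul_left
    ((2 - (1 / 4 : ℝ) ^ k) * t ^ (2 * (k + 1)))
  have hval : cscCoeff (k + 1) * (π * t) ^ (2 * (k + 1)) =
      (2 - (1 / 4 : ℝ) ^ k) * t ^ (2 * (k + 1)) *
        ((-1 : ℝ) ^ (k + 1 + 1) * 2 ^ (2 * (k + 1) - 1) * π ^ (2 * (k + 1)) *
          bernoulli (2 * (k + 1)) / Nat.factorial (2 * (k + 1))) := by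
    have h4 : (1 / 4 : ℝ) ^ k * 4 ^ k = 1 := by rw [← mul_pow]; norm_num
    have e1 : (2 : ℝ) ^ (2 * (k + 1)) = 4 * 4 ^ k := by rw [pow_mul]; ring
    have e2 : (2 : ℝ) ^ (2 * (k + 1) - 1) = 2 * 4 ^ k := by
      rw [show 2 * (k + 1) - 1 = 2 * k + 1 by omega, pow_succ, pow_mul]; ring
    rw [cscCoeff, e1, e2, mul_pow]
    linear_combination (2 * (-1) ^ (k + 1 + 1) * (bernoulli (2 * (k + 1)) : ℝ) *
      π ^ (2 * (k + 1)) * t ^ (2 * (k + 1)) / Nat.factorial (2 * (k + 1))) * h4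
  rw [hval]
  exact h.congr_fun fun n => by
    simp only [cscSeriesTerm, div_pow]
    ring

theorem hasSum_cscCoeff_mul_pow {z : ℝ} (hz : z ≠ 0) (hzπ : |z| < π) :
    HasSum (fun i => cscCoeff i * z ^ (2 * i)) (z / sin z) := by
  set t := z / π
  have hπt : π * t = z := mul_div_cancel₀ z pi_ne_zero
  have ht : |t| < 1 := by rwa [abs_div, abs_of_pos pi_pos, div_lt_one pi_pos]
  have ht_int (n : ℤ) : (n : ℝ) ≠ t := by
    intro hn
    rw [← hn] at ht hπt
    have hn1 : |n| < 1 := by exact_mod_cast ht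
    simp [Int.abs_lt_one_iff.mp hn1, ← hπt] at hz
  have hsum := hasSum_comm_of_nonneg (cscSeriesTerm_nonneg t)
    (fun n => hasSum_cscSeriesTerm_row (by linarith [n.cast_nonneg (α := ℝ)]))
    (hasSum_cscSeriesTerm_col t) (hasSum_mul_div_sin_sub_one ht_int)
  rw [hπt] at hsum
  rw [← hasSum_nat_add_iff' 1]
  simpa [cscCoeff_zero] using hsum

/-- For `0 < s < π²/2`, the series `Σ β_i s^i` converges to `√(2s)/sin(√(2s))`. -/
theorem betaCoeff_hasSum (s : ℝ) (hs : 0 < s) (hs' : s < Real.pi ^ 2 / 2) :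
    HasSum (fun i : ℕ => betaCoeff i * s ^ i)
      (Real.sqrt (2 * s) / Real.sin (Real.sqrt (2 * s))) := by
  have hz : √(2 * s) ≠ 0 := (sqrt_pos.mpr (by positivity)).ne'
  have hzπ : |√(2 * s)| < π := by
    rw [abs_of_nonneg (sqrt_nonneg _), sqrt_lt' pi_pos]
    linarith
  refine (hasSum_cscCoeff_mul_pow hz hzπ).congr_fun fun i => ?_
  rw [betaCoeff_mul_pow, pow_mul, sq_sqrt (by positivity)]

end
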